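/- If μ₁ : V₁ → W₁ and μ₂ : V₂ → W₂ are ℤ_p-linear maps between ℤ_p-modules that are both T-maps, then μ₁ ⊗ μ₂ : V₁ ⊗_{ℤ_p} V₂ → W₁ ⊗_{ℤ_p} W₂ is a T-map. -/

import Mathlib

open TensorProduct

/-- A `ℤ_[p]`-module is `ℤ_[p]`-torsion if every element is annihilated by some
nonzero element of `ℤ_[p]`. -/
def IsPadicTorsion (p : ℕ) [Fact p.Prime] (U : Type*) [AddCommGroup U] [Module ℤ_[p] U] :
    Prop :=
  ∀ u : U, ∃ lam : ℤ_[p], lam ≠ 0 ∧ lam • u = 0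

/-- A `ℤ_[p]`-linear map is a T-map if its kernel and cokernel are `ℤ_[p]`-torsion. -/
def IsTMap (p : ℕ) [Fact p.Prime] {V W : Type*} [AddCommGroup V] [Module ℤ_[p] V]
    [AddCommGroup W] [Module ℤ_[p] W] (μ : V →ₗ[ℤ_[p]] W) : Prop :=
  IsPadicTorsion p (LinearMap.ker μ) ∧ IsPadicTorsion p (W ⧸ LinearMap.range μ)

/-! Let `K` be the fraction field of `ℤ_p`. A map `μ` is a T-map exactly when `K ⊗ μ` is
bijective: `K` is flat, so `K ⊗ ker μ = ker (K ⊗ μ)` and `K ⊗ coker μ = coker (K ⊗ μ)`, and a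
module is torsion iff it dies after tensoring with `K`. Since base change commutes with tensor
products, `K ⊗ (μ₁ ⊗ μ₂) ≅ (K ⊗ μ₁) ⊗_K (K ⊗ μ₂)`, which is bijective when both factors are. -/

section ZeroIff

variable {R M N : Type*} [Semiring R] [AddCommMonoid M] [Module R M] [AddCommMonoid N]
  [Module R N] {f : M →ₗ[R] N}

theorem LinearMap.eq_zero_iff_subsingleton_of_injective (hf : Function.Injective f) :
    f = 0 ↔ Subsingleton M := by
  refine ⟨fun h ↦ ⟨fun x y ↦ hf ?_⟩, fun _ ↦ Subsingleton.elim _ _⟩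
  simp [h]

theorem LinearMap.eq_zero_iff_subsingleton_of_surjective (hf : Function.Surjective f) :
    f = 0 ↔ Subsingleton N := by
  refine ⟨fun h ↦ ⟨fun x y ↦ ?_⟩, fun _ ↦ ext fun _ ↦ Subsingleton.elim _ _⟩
  obtain ⟨x, rfl⟩ := hf x
  obtain ⟨y, rfl⟩ := hf y
  simp [h]

end ZeroIff

section Localization

variable {R : Type*} [CommRing R] (S : Submonoid R) (A : Type*) [CommRing A] [Algebra R A]
  [IsLocalization S A]
variable {M N : Type*} [AddCommGroup M] [Module R M] [AddCommGroup N] [Module R N]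

theorem Module.isTorsion'_iff_subsingleton_tensor :
    Module.IsTorsion' M S ↔ Subsingleton (A ⊗[R] M) := by
  rw [IsLocalizedModule.subsingleton_iff S (TensorProduct.mk R A M 1)]
  exact forall_congr' fun m ↦ ⟨fun ⟨s, hs⟩ ↦ ⟨s, s.2, hs⟩, fun ⟨r, hr, h⟩ ↦ ⟨⟨r, hr⟩, h⟩⟩

theorem LinearMap.injective_baseChange_iff_isTorsion'_ker (f : M →ₗ[R] N) :
    Function.Injective (f.baseChange A) ↔ Module.IsTorsion' (ker f) S := by
  have : Module.Flat R A := IsLocalization.flat A S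
  have hexact := Module.Flat.lTensor_exact A (exact_subtype_ker_map f)
  have hinj := Module.Flat.lTensor_preserves_injective_linearMap (M := A) _
    (ker f).injective_subtype
  rw [Module.isTorsion'_iff_subsingleton_tensor S A, baseChange_eq_ltensor,
    injective_iff_eq_zero_of_exact hexact, eq_zero_iff_subsingleton_of_injective hinj]

theorem LinearMap.surjective_baseChange_iff_isTorsion'_coker (f : M →ₗ[R] N) :
    Function.Surjective (f.baseChange A) ↔ Module.IsTorsion' (N ⧸ range f) S := by
  have hexact := lTensor_exact A (exact_map_mkQ_range f) (Submodule.mkQ_surjective _)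
  have hsurj := lTensor_surjective A (Submodule.mkQ_surjective (range f))
  rw [Module.isTorsion'_iff_subsingleton_tensor S A, baseChange_eq_ltensor,
    surjective_iff_eq_zero_of_exact hexact, eq_zero_iff_subsingleton_of_surjective hsurj]

theorem LinearMap.bijective_baseChange_iff_isTorsion' (f : M →ₗ[R] N) :
    Function.Bijective (f.baseChange A) ↔
      Module.IsTorsion' (ker f) S ∧ Module.IsTorsion' (N ⧸ range f) S := by
  rw [Function.Bijective, injective_baseChange_iff_isTorsion'_ker S,
    surjective_baseChange_iff_isTorsion'_coker S]

end Localization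

section BaseChangeMap

variable {R : Type*} [CommRing R] (A : Type*) [CommRing A] [Algebra R A]
  {M N M' N' : Type*} [AddCommGroup M] [Module R M] [AddCommGroup N] [Module R N]
  [AddCommGroup M'] [Module R M'] [AddCommGroup N'] [Module R N']
  (f : M →ₗ[R] N) (g : M' →ₗ[R] N')

theorem LinearMap.distribBaseChange_comp_baseChange_map :
    (AlgebraTensorModule.distribBaseChange R A N N').toLinearMap ∘ₗ (map f g).baseChange A =
      map (f.baseChange A) (g.baseChange A) ∘ₗ
        (AlgebraTensorModule.distribBaseChange R A M M').toLinearMap := by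
  ext
  simp

theorem LinearMap.bijective_baseChange_map (hf : Function.Bijective (f.baseChange A))
    (hg : Function.Bijective (g.baseChange A)) :
    Function.Bijective ((map f g).baseChange A) := by
  rw [← (AlgebraTensorModule.distribBaseChange R A N N').bijective.of_comp_iff',
    ← LinearEquiv.coe_toLinearMap, ← coe_comp, distribBaseChange_comp_baseChange_map, coe_comp]
  exact (map_bijective hf hg).comp (AlgebraTensorModule.distribBaseChange R A M M').bijective

end BaseChangeMap

section Padic

variable (p : ℕ) [Fact p.Prime]

theorem isPadicTorsion_iff_isTorsion' (U : Type*) [AddCommGroup U] [Module ℤ_[p] U] :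
    IsPadicTorsion p U ↔ Module.IsTorsion' U (nonZeroDivisors ℤ_[p]) :=
  forall_congr' fun _ ↦ ⟨fun ⟨c, hc, h⟩ ↦ ⟨⟨c, mem_nonZeroDivisors_of_ne_zero hc⟩, h⟩,
    fun ⟨c, h⟩ ↦ ⟨c, nonZeroDivisors.coe_ne_zero c, h⟩⟩

theorem isTMap_iff_bijective_baseChange {V W : Type*} [AddCommGroup V] [Module ℤ_[p] V]
    [AddCommGroup W] [Module ℤ_[p] W] (μ : V →ₗ[ℤ_[p]] W) :
    IsTMap p μ ↔ Function.Bijective (μ.baseChange (FractionRing ℤ_[p])) := by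
  rw [IsTMap, isPadicTorsion_iff_isTorsion', isPadicTorsion_iff_isTorsion',
    μ.bijective_baseChange_iff_isTorsion' (nonZeroDivisors ℤ_[p]) (FractionRing ℤ_[p])]

end Padic

/-- If `μ₁ : V₁ → W₁` and `μ₂ : V₂ → W₂` are T-maps of `ℤ_[p]`-modules then
`μ₁ ⊗ μ₂ : V₁ ⊗[ℤ_[p]] V₂ → W₁ ⊗[ℤ_[p]] W₂` is a T-map. -/
theorem stmt3 (p : ℕ) [Fact p.Prime] (V₁ W₁ V₂ W₂ : Type)
    [AddCommGroup V₁] [Module ℤ_[p] V₁] [AddCommGroup W₁] [Module ℤ_[p] W₁]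
    [AddCommGroup V₂] [Module ℤ_[p] V₂] [AddCommGroup W₂] [Module ℤ_[p] W₂]
    (μ₁ : V₁ →ₗ[ℤ_[p]] W₁) (μ₂ : V₂ →ₗ[ℤ_[p]] W₂) (h₁ : IsTMap p μ₁) (h₂ : IsTMap p μ₂) :
    IsTMap p (TensorProduct.map μ₁ μ₂) := by
  rw [isTMap_iff_bijective_baseChange] at h₁ h₂ ⊢
  exact LinearMap.bijective_baseChange_map _ μ₁ μ₂ h₁ h₂
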